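/- Let 𝕜 be a field and A a commutative 𝕜-algebra equipped with an ℕ-grading by 𝕜-submodules 𝒜 (a graded algebra) that is connected, i.e., the degree-zero component 𝒜 0 is the 𝕜-span of 1. Let M be an A-module equipped with an ℕ-grading by 𝕜-submodules ℳ compatible with the grading of A (M is the internal direct sum of the ℳ d, and 𝒜 i • ℳ j ⊆ ℳ (i + j)), and assume M admits a basis as an A-module consisting of homogeneous elements. Then for every basis (b_j)_{j ∈ J} of M as a 𝕜-vector space consisting of homogeneous elements, there exists a subset J' ⊆ J such that (b_j)_{j ∈ J'} is a basis of M as an A-module. -/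

import Mathlib

/-!
Let `𝔪 = 𝒜₊` be the irrelevant ideal. By connectedness every `a : A` is a scalar modulo `𝔪`, so
`M ⧸ 𝔪M` is a `𝕜`-vector space spanned by the images of the `b j`; take `J'` indexing a basis of
it among them. The `b j`, `j ∈ J'`, span a homogeneous submodule `P` with `P + 𝔪M = M`, hence
`P = M` by graded Nakayama (induction on the degree). The kernel `K` of `A^(J') → M` has all its
coefficients in `𝔪` by the independence modulo `𝔪M`; since `M` is free the map splits, which
upgrades `K ⊆ 𝔪 A^(J')` to `K ⊆ 𝔪K`, so `K ⊆ 𝔪ⁿ A^(J')` for all `n`, and `⋂ 𝔪ⁿ = 0` because `𝔪ⁿ`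
lives in degrees `≥ n`.
-/

open DirectSum
open scoped HomogeneousIdeal

section Graded

variable {A : Type*} [CommRing A] {σ : Type*} [SetLike σ A] [AddSubmonoidClass σ A]
  (𝒜 : ℕ → σ) [GradedRing 𝒜]
  {M : Type*} [AddCommGroup M] [Module A M] {τ : Type*} [SetLike τ M] [AddSubmonoidClass τ M]
  (ℳ : ℕ → τ) [Decomposition ℳ]

theorem coe_decompose_smul_mem [SetLike.GradedSMul 𝒜 ℳ] {P : Submodule A M} (a : A) (m : M)
    (d : ℕ) (h : ∀ i j, i + j = d → (decompose 𝒜 a i : A) • (decompose ℳ m j : M) ∈ P) :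
    (decompose ℳ (a • m) d : M) ∈ P := by
  classical
  rw [← sum_support_decompose 𝒜 a, ← sum_support_decompose ℳ m]
  simp only [Finset.sum_smul, Finset.smul_sum]
  rw [decompose_sum, DFinsupp.finsetSum_apply, AddSubmonoidClass.coe_finsetSum]
  refine Submodule.sum_mem _ fun j _ => ?_
  rw [decompose_sum, DFinsupp.finsetSum_apply, AddSubmonoidClass.coe_finsetSum]
  refine Submodule.sum_mem _ fun i _ => ?_
  have hij := SetLike.GradedSMul.smul_mem (decompose 𝒜 a i).2 (decompose ℳ m j).2
  rw [decompose_of_mem ℳ hij, coe_of_apply]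
  split_ifs with hd
  · exact h i j hd
  · exact P.zero_mem

theorem Submodule.isHomogeneous_span [SetLike.GradedSMul 𝒜 ℳ] (S : Set M)
    (hS : ∀ x ∈ S, SetLike.IsHomogeneousElem ℳ x) : (Submodule.span A S).IsHomogeneous ℳ := by
  intro d m hm
  induction hm using Submodule.span_induction generalizing d with
  | mem x hx =>
    obtain ⟨e, he⟩ := hS x hx
    rw [decompose_of_mem ℳ he, coe_of_apply]
    split_ifs
    · exact Submodule.subset_span hx
    · exact Submodule.zero_mem _
  | zero => simp
  | add x y _ _ hx hy =>
    rw [decompose_add, DirectSum.add_apply, AddMemClass.coe_add]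
    exact add_mem (hx d) (hy d)
  | smul a x _ hx =>
    exact coe_decompose_smul_mem 𝒜 ℳ a x d fun i j _ => Submodule.smul_mem _ _ (hx j)

theorem coe_decompose_mem_of_mem_irrelevant_smul [SetLike.GradedSMul 𝒜 ℳ] {P : Submodule A M}
    {d : ℕ} (hP : ∀ j < d, ∀ m ∈ ℳ j, m ∈ P) {x : M}
    (hx : x ∈ (𝒜₊).toIdeal • (⊤ : Submodule A M)) : (decompose ℳ x d : M) ∈ P := by
  refine Submodule.smul_induction_on hx (fun r hr n _ => ?_) (fun x y hx hy => ?_)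
  · refine coe_decompose_smul_mem 𝒜 ℳ r n d fun i j hij => ?_
    rcases Nat.eq_zero_or_pos i with rfl | hi
    · rw [show (decompose 𝒜 r 0 : A) = 0 from hr, zero_smul]
      exact P.zero_mem
    · exact P.smul_mem _ (hP j (by omega) _ (decompose ℳ n j).2)
  · rw [decompose_add, DirectSum.add_apply, AddMemClass.coe_add]
    exact add_mem hx hy

theorem Submodule.IsHomogeneous.eq_top_of_sup_irrelevant_smul_eq_top [SetLike.GradedSMul 𝒜 ℳ]
    {P : Submodule A M} (hP : P.IsHomogeneous ℳ) (h : P ⊔ (𝒜₊).toIdeal • ⊤ = ⊤) : P = ⊤ := by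
  have hgraded : ∀ d, ∀ m ∈ ℳ d, m ∈ P := by
    intro d
    induction d using Nat.strong_induction_on with
    | _ d ih =>
      intro m hm
      obtain ⟨p, hp, x, hx, rfl⟩ := Submodule.mem_sup.1 (h ▸ Submodule.mem_top : m ∈ P ⊔ _)
      rw [← decompose_of_mem_same ℳ hm, decompose_add, DirectSum.add_apply, AddMemClass.coe_add]
      exact add_mem (hP d hp) (coe_decompose_mem_of_mem_irrelevant_smul 𝒜 ℳ ih hx)
  refine Submodule.eq_top_iff'.2 fun m => ?_
  induction m using Decomposition.inductionOn ℳ with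
  | zero => exact P.zero_mem
  | homogeneous m => exact hgraded _ _ m.2
  | add m m' hm hm' => exact add_mem hm hm'

theorem coe_decompose_eq_zero_of_mem_irrelevant_pow {n : ℕ} {a : A}
    (ha : a ∈ (𝒜₊).toIdeal ^ n) {i : ℕ} (hi : i < n) : (decompose 𝒜 a i : A) = 0 := by
  induction n generalizing a i with
  | zero => omega
  | succ n ih =>
    rw [pow_succ] at ha
    refine Submodule.mul_induction_on ha (fun x hx r hr => ?_) (fun x y hx hy => ?_)
    · rw [← Submodule.mem_bot A, ← smul_eq_mul]
      refine coe_decompose_smul_mem 𝒜 𝒜 x r i fun i' j hij => ?_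
      rcases Nat.lt_or_ge i' n with hi' | hi'
      · rw [ih hx hi', zero_smul]
        exact Submodule.zero_mem _
      · obtain rfl : j = 0 := by omega
        rw [show (decompose 𝒜 r 0 : A) = 0 from hr, smul_zero]
        exact Submodule.zero_mem _
    · rw [decompose_add, DirectSum.add_apply, AddMemClass.coe_add, hx, hy, add_zero]

theorem HomogeneousIdeal.iInf_irrelevant_pow_eq_bot : ⨅ n, (𝒜₊).toIdeal ^ n = ⊥ := by
  classical
  refine _root_.eq_bot_iff.2 fun a ha => ?_
  rw [Submodule.mem_iInf] at ha
  rw [Submodule.mem_bot, ← sum_support_decompose 𝒜 a]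
  exact Finset.sum_eq_zero fun i _ =>
    coe_decompose_eq_zero_of_mem_irrelevant_pow 𝒜 (ha (i + 1)) i.lt_succ_self

end Graded

section SmulTop

variable {R : Type*} [CommRing R] (I : Ideal R)

theorem Finsupp.mem_ideal_smul_top_iff {ι : Type*} (x : ι →₀ R) :
    x ∈ I • (⊤ : Submodule R (ι →₀ R)) ↔ ∀ i, x i ∈ I := by
  have htop : (⊤ : Submodule R (ι →₀ R)) = Finsupp.submodule fun _ => ⊤ := by
    ext; simp
  rw [htop, ← Finsupp.submodule_smul, Finsupp.mem_submodule_iff]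
  simp only [smul_eq_mul, Ideal.mul_top]

variable {F M : Type*} [AddCommGroup F] [Module R F] [AddCommGroup M] [Module R M]

theorem LinearMap.ker_le_smul_ker_of_le_smul_top [Module.Projective R M] {φ : F →ₗ[R] M}
    (hφ : Function.Surjective φ) (h : LinearMap.ker φ ≤ I • ⊤) :
    LinearMap.ker φ ≤ I • LinearMap.ker φ := by
  obtain ⟨s, hs⟩ := Module.projective_lifting_property φ LinearMap.id hφ
  let ρ : F →ₗ[R] F := LinearMap.id - s ∘ₗ φ
  have hρ : ∀ x, φ (ρ x) = 0 := fun x => by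
    simp [ρ, ← LinearMap.comp_apply φ s, hs]
  intro k hk
  have hρk : ρ k = k := by simp [ρ, LinearMap.mem_ker.1 hk]
  have hmem : ρ k ∈ (I • ⊤ : Submodule R F).map ρ := Submodule.mem_map_of_mem (h hk)
  rw [Submodule.map_smul'', hρk] at hmem
  have hrange : (⊤ : Submodule R F).map ρ ≤ LinearMap.ker φ := by
    rintro _ ⟨x, -, rfl⟩
    exact hρ x
  exact smul_mono_right I hrange hmem

theorem LinearMap.ker_eq_bot_of_le_smul_top [Module.Projective R M] {ι : Type*}
    {φ : (ι →₀ R) →ₗ[R] M} (hφ : Function.Surjective φ) (h : LinearMap.ker φ ≤ I • ⊤)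
    (hI : ⨅ n, I ^ n = ⊥) : LinearMap.ker φ = ⊥ := by
  have hpow : ∀ n, LinearMap.ker φ ≤ I ^ n • ⊤ := by
    intro n
    induction n with
    | zero => simp
    | succ n ih =>
      calc LinearMap.ker φ ≤ I • LinearMap.ker φ := LinearMap.ker_le_smul_ker_of_le_smul_top I hφ h
        _ ≤ I • I ^ n • ⊤ := smul_mono_right I ih
        _ = I ^ (n + 1) • ⊤ := by rw [← Submodule.smul_assoc, smul_eq_mul, ← pow_succ']
  refine eq_bot_iff.2 fun k hk => (Submodule.mem_bot R).2 (Finsupp.ext fun i => ?_)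
  rw [Finsupp.coe_zero, Pi.zero_apply, ← Submodule.mem_bot R, ← hI, Submodule.mem_iInf]
  exact fun n => (Finsupp.mem_ideal_smul_top_iff _ k).1 (hpow n hk) i

end SmulTop

section Connected

variable {𝕜 A M : Type*} [CommRing 𝕜] [CommRing A] [Algebra 𝕜 A] [AddCommGroup M]
  [Module A M] [Module 𝕜 M] [IsScalarTower 𝕜 A M]

theorem exists_sub_algebraMap_mem_irrelevant (𝒜 : ℕ → Submodule 𝕜 A) [GradedAlgebra 𝒜]
    (h0 : 𝒜 0 ≤ Submodule.span 𝕜 {1}) (a : A) :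
    ∃ r : 𝕜, a - algebraMap 𝕜 A r ∈ (𝒜₊).toIdeal := by
  obtain ⟨r, hr⟩ := Submodule.mem_span_singleton.1 (h0 (decompose 𝒜 a 0).2)
  refine ⟨r, ?_⟩
  rw [Algebra.algebraMap_eq_smul_one, hr]
  change GradedRing.proj 𝒜 0 _ = 0
  rw [map_sub, GradedRing.proj_apply, GradedRing.proj_apply,
    decompose_of_mem_same 𝒜 (decompose 𝒜 a 0).2, sub_self]

theorem Submodule.mkQ_smul_of_sub_algebraMap_mem {I : Ideal A} {a : A} {r : 𝕜}
    (h : a - algebraMap 𝕜 A r ∈ I) (m : M) :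
    (I • ⊤ : Submodule A M).mkQ (a • m) = r • (I • ⊤ : Submodule A M).mkQ m := by
  rw [← algebraMap_smul A r, ← sub_eq_zero, map_smul, ← sub_smul, ← map_smul,
    Submodule.mkQ_apply, Submodule.Quotient.mk_eq_zero]
  exact Submodule.smul_mem_smul h Submodule.mem_top

theorem ker_linearCombination_le_smul_top {I : Ideal A}
    (hI : ∀ a, ∃ r : 𝕜, a - algebraMap 𝕜 A r ∈ I) {ι : Type*} {v : ι → M}
    (hv : LinearIndependent 𝕜 ((I • ⊤ : Submodule A M).mkQ ∘ v)) :
    LinearMap.ker (Finsupp.linearCombination A v) ≤ I • ⊤ := by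
  intro k hk
  choose r hr using hI
  have hrel : ∑ i ∈ k.support, r (k i) • (I • ⊤ : Submodule A M).mkQ (v i) = 0 := by
    have := congrArg (I • ⊤ : Submodule A M).mkQ (LinearMap.mem_ker.1 hk)
    rw [Finsupp.linearCombination_apply, Finsupp.sum, map_sum, map_zero] at this
    simpa only [Submodule.mkQ_smul_of_sub_algebraMap_mem (hr _)] using this
  refine (Finsupp.mem_ideal_smul_top_iff I k).2 fun i => ?_
  by_cases hi : i ∈ k.support
  · simpa [linearIndependent_iff'.1 hv _ _ hrel i hi] using hr (k i)
  · rw [Finsupp.notMem_support_iff.1 hi]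
    exact I.zero_mem

theorem Submodule.span_sup_eq_top_of_span_image_mkQ_eq_top (N : Submodule A M) {s : Set M}
    (h : Submodule.span 𝕜 (N.mkQ '' s) = ⊤) : Submodule.span A s ⊔ N = ⊤ := by
  rw [sup_comm, ← Submodule.map_mkQ_eq_top, Submodule.map_span,
    ← Submodule.restrictScalars_eq_top_iff 𝕜, _root_.eq_top_iff, ← h]
  exact Submodule.span_le_restrictScalars 𝕜 A _

end Connected

/-- Let `A` be a connected `ℕ`-graded commutative algebra over a field `𝕜`,
and `M` a graded `A`-module admitting an `A`-basis of homogeneous elements.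
Then from any homogeneous `𝕜`-vector-space basis of `M` one can extract a
subfamily which is an `A`-basis of `M`. -/
theorem extract_module_basis_from_homogeneous_vector_basis
    (𝕜 : Type*) [Field 𝕜] (A : Type*) [CommRing A] [Algebra 𝕜 A]
    (𝒜 : ℕ → Submodule 𝕜 A) [GradedAlgebra 𝒜]
    (hconn : 𝒜 0 = Submodule.span 𝕜 {1})
    (M : Type*) [AddCommGroup M] [Module A M] [Module 𝕜 M]
    [IsScalarTower 𝕜 A M]
    (ℳ : ℕ → Submodule 𝕜 M) [DirectSum.Decomposition ℳ]
    (hcompat : ∀ (i j : ℕ) (a : A) (m : M), a ∈ 𝒜 i → m ∈ ℳ j → a • m ∈ ℳ (i + j))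
    (hfree : ∃ s : Set M, (∀ x ∈ s, ∃ d, x ∈ ℳ d) ∧
      LinearIndependent A ((↑) : s → M) ∧ Submodule.span A s = ⊤)
    (J : Type*) (b : Module.Basis J 𝕜 M) (hb : ∀ j, ∃ d, b j ∈ ℳ d) :
    ∃ J' : Set J,
      LinearIndependent A (fun j : J' => b j) ∧
      Submodule.span A (Set.range (fun j : J' => b j)) = ⊤ := by
  have : SetLike.GradedSMul 𝒜 ℳ := ⟨fun _ _ _ _ ha hm => hcompat _ _ _ _ ha hm⟩
  obtain ⟨s, -, hs_ind, hs_span⟩ := hfree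
  have : Module.Free A M :=
    .of_basis (Module.Basis.mk hs_ind (by rw [Subtype.range_coe, hs_span]))
  set I := (𝒜₊).toIdeal
  let q := ((I • ⊤ : Submodule A M).mkQ).restrictScalars 𝕜
  have hqb : Submodule.span 𝕜 (Set.range (q ∘ b)) = ⊤ := by
    rw [Set.range_comp, Submodule.span_image, b.span_eq, Submodule.map_top,
      LinearMap.range_restrictScalars, Submodule.range_mkQ,
      Submodule.restrictScalars_top]
  have hempty := linearIndepOn_empty 𝕜 (q ∘ b)
  set J' := hempty.extend (Set.empty_subset Set.univ)
  have hJ'span : Submodule.span 𝕜 ((q ∘ b) '' J') = ⊤ := by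
    rw [hempty.span_image_extend_eq_span_image, Set.image_univ, hqb]
  have hspan : Submodule.span A (b '' J') = ⊤ := by
    refine (Submodule.isHomogeneous_span 𝒜 ℳ _ ?_).eq_top_of_sup_irrelevant_smul_eq_top 𝒜 ℳ
      (Submodule.span_sup_eq_top_of_span_image_mkQ_eq_top _ (by rwa [Set.image_comp] at hJ'span))
    rintro _ ⟨j, -, rfl⟩
    exact hb j
  refine ⟨J', ?_, by rwa [← Set.image_eq_range]⟩
  refine linearIndependent_iff_ker.2 <| LinearMap.ker_eq_bot_of_le_smul_top I ?_
    (ker_linearCombination_le_smul_top (exists_sub_algebraMap_mem_irrelevant 𝒜 hconn.le)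
      (hempty.linearIndepOn_extend _))
    (HomogeneousIdeal.iInf_irrelevant_pow_eq_bot 𝒜)
  rw [← LinearMap.range_eq_top, Finsupp.range_linearCombination, ← hspan, Set.image_eq_range]
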